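/- Let n ≥ 2, 1 ≤ ζ ≤ n−1 with 2ζ ≥ n, c > 0, and let K > 0 be the smallest eigenvalue of the matrix Σ_{|I|=ζ} E_I (so K = C(n−2, ζ−1)). Let f_m ≥ 0 satisfy f_m < (K/n)·(c/(2·C(n,ζ)))^{n/(n−ζ)}. Let λ_1,…,λ_n > 0 satisfy, for every i, (c/(2·C(n,ζ)))·e_{n−ζ}(1/λ omitting i) < 1. Then the n×n matrix M with entries M_{ij} = (c/C(n,ζ)) · Σ_{|I|=ζ} λ_I · (E_I)_{ij} − f_m·1, where λ_I = ∏_{j∈I} λ_j, (E_I)_{ij} = 1 if i,j ∉ I and 0 otherwise, and 1 is the all-ones matrix, is positive definite. -/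

import Mathlib

/-! Write `a = c / (2 C(n,ζ))`. A set `t` of size `n - ζ` misses some index `i`, so the cone
condition at `i` gives `a < λ_t`. As `n - ζ ≤ ζ`, every `ζ`-set `I` has `(n - ζ)`-subsets, and each
element of `I` lies in `C(ζ-1, n-ζ-1)` of them; multiplying the bounds over all of them yields
`λ_I ≥ a ^ (ζ / (n - ζ))`. The matrix is `Σ_I (c / C(n,ζ)) λ_I E_I - f_m 𝟏`, where
`Σ_I E_I = C(n-2,ζ) 𝟏 + K Id ≥ K Id` and `𝟏 ≤ n Id`, so its quadratic form is at least
`(2 K a ^ (n / (n - ζ)) - n f_m) |x|²`. -/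

open Finset Matrix

theorem Finset.prod_powersetCard_prod {α β : Type*} [DecidableEq α] [CommMonoid β]
    (s : Finset α) {d : ℕ} (hd : 0 < d) (f : α → β) :
    ∏ t ∈ s.powersetCard d, ∏ j ∈ t, f j = (∏ j ∈ s, f j) ^ (#s - 1).choose (d - 1) := by
  rw [prod_comm' (t' := s) (s' := fun j => (s.powersetCard d).filter ({j} ⊆ ·))]
  · rw [← prod_pow]
    refine prod_congr rfl fun j hj => ?_
    rw [prod_const, card_filter_powersetCard_subset _ _ _ (singleton_subset_iff.2 hj)
      (by rw [card_singleton]; exact hd), card_singleton]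
  · intro t j
    simp only [mem_filter, mem_powersetCard, singleton_subset_iff]
    constructor
    · rintro ⟨⟨hts, htd⟩, hj⟩; exact ⟨⟨⟨hts, htd⟩, hj⟩, hts hj⟩
    · rintro ⟨⟨⟨hts, htd⟩, hj⟩, -⟩; exact ⟨⟨hts, htd⟩, hj⟩

theorem Real.rpow_div_le_prod_of_le_prod_powersetCard {ι : Type*} [DecidableEq ι]
    {s : Finset ι} {d : ℕ} (hd : 0 < d) (hds : d ≤ #s) {f : ι → ℝ} (hf : ∀ j ∈ s, 0 ≤ f j)
    {a : ℝ} (ha : 0 ≤ a) (h : ∀ t ∈ s.powersetCard d, a ≤ ∏ j ∈ t, f j) :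
    a ^ ((#s : ℝ) / d) ≤ ∏ j ∈ s, f j := by
  set m := (#s - 1).choose (d - 1)
  have hm : m ≠ 0 := (Nat.choose_pos (by omega)).ne'
  have hchoose : (#s : ℝ) / d * m = ((#s).choose d : ℕ) := by
    have key : #s * m = (#s).choose d * d := by
      obtain ⟨k, hk⟩ : ∃ k, #s = k + 1 := ⟨#s - 1, by omega⟩
      obtain ⟨e, he⟩ : ∃ e, d = e + 1 := ⟨d - 1, by omega⟩
      simp only [m, hk, he, Nat.add_sub_cancel]
      exact Nat.add_one_mul_choose_eq k e
    rw [div_mul_eq_mul_div, div_eq_iff (by positivity)]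
    exact_mod_cast key
  rw [← pow_le_pow_iff_left₀ (by positivity) (prod_nonneg hf) hm, ← Real.rpow_mul_natCast ha,
    hchoose, Real.rpow_natCast, ← prod_powersetCard_prod s hd, ← card_powersetCard,
    ← prod_const]
  exact prod_le_prod (fun _ _ => ha) h

theorem lt_prod_of_mul_sum_powersetCard_inv_lt_one {ι : Type*} {s t : Finset ι} (hts : t ⊆ s)
    {lam : ι → ℝ} (hlam : ∀ j ∈ s, 0 < lam j) {a : ℝ} (ha : 0 ≤ a)
    (h : a * ∑ u ∈ s.powersetCard #t, ∏ j ∈ u, 1 / lam j < 1) :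
    a < ∏ j ∈ t, lam j := by
  have hpos : 0 < ∏ j ∈ t, lam j := prod_pos fun j hj => hlam j (hts hj)
  have hterm : ∏ j ∈ t, 1 / lam j ≤ ∑ u ∈ s.powersetCard #t, ∏ j ∈ u, 1 / lam j :=
    single_le_sum (f := fun u => ∏ j ∈ u, 1 / lam j)
      (fun u hu => prod_nonneg fun j hj =>
        (one_div_pos.2 (hlam j ((mem_powersetCard.1 hu).1 hj))).le)
      (mem_powersetCard.2 ⟨hts, rfl⟩)
  rw [prod_div_distrib, prod_const_one] at hterm
  rw [← div_lt_one hpos, div_eq_mul_one_div]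
  exact (mul_le_mul_of_nonneg_left hterm ha).trans_lt h

theorem rpow_div_le_prod_of_forall_mul_sum_powersetCard_inv_lt_one {ι : Type*} [Fintype ι]
    [DecidableEq ι] {lam : ι → ℝ} (hlam : ∀ i, 0 < lam i) {a : ℝ} (ha : 0 ≤ a) {d : ℕ}
    (hd : 0 < d) (hcone : ∀ i, a * ∑ t ∈ (univ.erase i).powersetCard d, ∏ j ∈ t, 1 / lam j < 1)
    {I : Finset ι} (hI : I ≠ univ) (hdI : d ≤ #I) :
    a ^ ((#I : ℝ) / d) ≤ ∏ j ∈ I, lam j := by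
  obtain ⟨i, -, hi⟩ := exists_of_ssubset (ssubset_univ_iff.2 hI)
  refine Real.rpow_div_le_prod_of_le_prod_powersetCard hd hdI (fun j _ => (hlam j).le) ha
    fun t ht => (lt_prod_of_mul_sum_powersetCard_inv_lt_one (s := univ.erase i) ?_
      (fun j _ => hlam j) ha ?_).le
  · obtain ⟨htI, -⟩ := mem_powersetCard.1 ht
    exact subset_erase.2 ⟨subset_univ t, fun hit => hi (htI hit)⟩
  · rw [(mem_powersetCard.1 ht).2]
    exact hcone i

section

variable {ι : Type*} [Fintype ι]

theorem dotProduct_ones_mulVec (x : ι → ℝ) :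
    x ⬝ᵥ of (fun _ _ : ι => (1 : ℝ)) *ᵥ x = (∑ i, x i) ^ 2 := by
  simp only [dotProduct, mulVec, of_apply, one_mul, ← sum_mul, sq]

theorem posDef_sub_smul_ones {A : Matrix ι ι ℝ} (hA : A.IsSymm) {μ f : ℝ} (hf : 0 ≤ f)
    (hfμ : f * Fintype.card ι < μ) (hAμ : ∀ x, μ * (x ⬝ᵥ x) ≤ x ⬝ᵥ A *ᵥ x) :
    (A - f • of fun _ _ => 1).PosDef := by
  refine .of_dotProduct_mulVec_pos (isHermitian_iff_isSymm.2 (hA.sub (.ext fun _ _ => ?_)))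
    fun x hx => ?_
  · rfl
  have hxx : 0 < x ⬝ᵥ x := by simpa using dotProduct_star_self_pos_iff.2 hx
  have hCS : (∑ i, x i) ^ 2 ≤ Fintype.card ι * (x ⬝ᵥ x) := by
    simpa [dotProduct, sq] using sq_sum_le_card_mul_sum_sq (s := univ) (f := x)
  rw [star_trivial, sub_mulVec, dotProduct_sub, smul_mulVec, dotProduct_smul,
    dotProduct_ones_mulVec, smul_eq_mul]
  nlinarith [hAμ x, mul_le_mul_of_nonneg_left hCS hf]

variable [DecidableEq ι]

-- The matrix `E_I` of the paper.
def complOnes (I : Finset ι) : Matrix ι ι ℝ := of fun i j => if i ∉ I ∧ j ∉ I then 1 else 0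

theorem dotProduct_complOnes_mulVec (I : Finset ι) (x : ι → ℝ) :
    x ⬝ᵥ complOnes I *ᵥ x = (∑ j ∈ Iᶜ, x j) ^ 2 := by
  rw [compl_eq_univ_sdiff, ← filter_notMem_eq_sdiff, sum_filter, sq, sum_mul_sum]
  simp only [dotProduct, mulVec, complOnes, of_apply, mul_sum]
  refine sum_congr rfl fun i _ => sum_congr rfl fun j _ => ?_
  by_cases hi : i ∈ I <;> by_cases hj : j ∈ I <;> simp [hi, hj]

theorem sum_powersetCard_complOnes {k : ℕ} (hk : 1 ≤ k) (hι : 2 ≤ Fintype.card ι) :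
    ∑ I ∈ univ.powersetCard k, complOnes I =
      ((Fintype.card ι - 2).choose k : ℝ) • of (fun _ _ : ι => (1 : ℝ)) +
        ((Fintype.card ι - 2).choose (k - 1) : ℝ) • (1 : Matrix ι ι ℝ) := by
  have hcount : ∀ i j : ι, (univ.powersetCard k).filter (fun I => i ∉ I ∧ j ∉ I) =
      ({i, j}ᶜ : Finset ι).powersetCard k := by
    intro i j; ext I
    simp only [mem_filter, mem_powersetCard, subset_univ, true_and, subset_compl_iff_disjoint_right,
      disjoint_insert_right, disjoint_singleton_right]
    tauto
  ext i j
  simp only [Matrix.sum_apply, complOnes, of_apply, sum_boole, hcount, card_powersetCard,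
    card_compl, Matrix.add_apply, Matrix.smul_apply, one_apply, smul_eq_mul, mul_one]
  obtain ⟨m, hm⟩ : ∃ m, Fintype.card ι = m + 2 := ⟨_, (Nat.sub_add_cancel hι).symm⟩
  obtain ⟨l, rfl⟩ : ∃ l, k = l + 1 := ⟨_, (Nat.sub_add_cancel hk).symm⟩
  rcases eq_or_ne i j with rfl | hij
  · simp [hm, Nat.choose_succ_succ', add_comm]
  · simp [hm, hij]

theorem le_dotProduct_sum_smul_complOnes_mulVec {k : ℕ} (hk : 1 ≤ k) (hι : 2 ≤ Fintype.card ι)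
    {w : Finset ι → ℝ} {μ : ℝ} (hμ : 0 ≤ μ) (hw : ∀ I ∈ univ.powersetCard k, μ ≤ w I)
    (x : ι → ℝ) :
    μ * (Fintype.card ι - 2).choose (k - 1) * (x ⬝ᵥ x) ≤
      x ⬝ᵥ (∑ I ∈ univ.powersetCard k, w I • complOnes I) *ᵥ x := by
  have hsum : x ⬝ᵥ (∑ I ∈ univ.powersetCard k, complOnes I) *ᵥ x =
      (Fintype.card ι - 2).choose k * (∑ i, x i) ^ 2 +
        (Fintype.card ι - 2).choose (k - 1) * (x ⬝ᵥ x) := by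
    rw [sum_powersetCard_complOnes hk hι, add_mulVec, dotProduct_add, smul_mulVec, smul_mulVec,
      dotProduct_smul, dotProduct_smul, one_mulVec, dotProduct_ones_mulVec, smul_eq_mul,
      smul_eq_mul]
  calc μ * (Fintype.card ι - 2).choose (k - 1) * (x ⬝ᵥ x)
      ≤ μ * (x ⬝ᵥ (∑ I ∈ univ.powersetCard k, complOnes I) *ᵥ x) := by
        rw [hsum, mul_assoc]
        gcongr
        exact le_add_of_nonneg_left (by positivity)
    _ = ∑ I ∈ univ.powersetCard k, μ * (x ⬝ᵥ complOnes I *ᵥ x) := by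
        rw [sum_mulVec, dotProduct_sum, mul_sum]
    _ ≤ ∑ I ∈ univ.powersetCard k, w I * (x ⬝ᵥ complOnes I *ᵥ x) :=
        sum_le_sum fun I hI => mul_le_mul_of_nonneg_right (hw I hI)
          (by rw [dotProduct_complOnes_mulVec]; positivity)
    _ = x ⬝ᵥ (∑ I ∈ univ.powersetCard k, w I • complOnes I) *ᵥ x := by
        simp only [sum_mulVec, dotProduct_sum, smul_mulVec, dotProduct_smul, smul_eq_mul]

end

theorem stmt_16_general (n ζ : ℕ) (hn : 2 ≤ n) (hζ1 : 1 ≤ ζ) (hζ2 : ζ ≤ n - 1) (hζ3 : n ≤ 2 * ζ)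
    (c : ℝ) (hc : 0 < c) (K : ℝ) (hK : K = ((n - 2).choose (ζ - 1) : ℝ))
    (fm : ℝ) (hfm0 : 0 ≤ fm)
    (hfm : fm < K / n * (c / (2 * (n.choose ζ : ℝ))) ^ ((n : ℝ) / ((n : ℝ) - ζ)))
    (lam : Fin n → ℝ) (hlam : ∀ i, 0 < lam i)
    (hcone : ∀ i : Fin n,
      c / (2 * (n.choose ζ : ℝ)) *
        (∑ t ∈ (Finset.univ.erase i).powersetCard (n - ζ), ∏ j ∈ t, 1 / lam j) < 1)
    (M : Matrix (Fin n) (Fin n) ℝ)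
    (hM : ∀ i j, M i j = c / (n.choose ζ : ℝ) *
        (∑ I ∈ Finset.univ.powersetCard ζ,
          (∏ t ∈ I, lam t) * (if i ∉ I ∧ j ∉ I then (1 : ℝ) else 0)) - fm) :
    M.PosDef := by
  set a := c / (2 * (n.choose ζ : ℝ))
  set q : ℝ := ζ / (n - ζ)
  have ha : 0 < a := by have := Nat.choose_pos (show ζ ≤ n by omega); positivity
  have hnζ : ((n - ζ : ℕ) : ℝ) = n - ζ := Nat.cast_sub (by omega)
  have hlamI : ∀ I ∈ (univ : Finset (Fin n)).powersetCard ζ,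
      c / n.choose ζ * a ^ q ≤ c / n.choose ζ * ∏ j ∈ I, lam j := by
    intro I hI
    have hIcard := (mem_powersetCard.1 hI).2
    have hIu : I ≠ univ := fun h => by simp [h] at hIcard; omega
    have hprod := rpow_div_le_prod_of_forall_mul_sum_powersetCard_inv_lt_one hlam ha.le
      (d := n - ζ) (by omega) hcone hIu (by omega)
    rw [hIcard, hnζ] at hprod
    gcongr
  have hMeq : M = ∑ I ∈ univ.powersetCard ζ, (c / n.choose ζ * ∏ j ∈ I, lam j) • complOnes I -
      fm • of fun _ _ => 1 := by
    ext i j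
    simp [hM, complOnes, Matrix.sum_apply, mul_sum]
  have hfm_lt : fm * n < c / n.choose ζ * a ^ q * K := by
    have hexp : (n : ℝ) / (n - ζ) = 1 + q := by
      have : (0 : ℝ) < n - ζ := by rw [← hnζ]; exact_mod_cast (by omega : 0 < n - ζ)
      simp only [q]; field_simp; ring
    rw [hexp, Real.rpow_add ha, Real.rpow_one] at hfm
    have hcC : c / n.choose ζ = 2 * a := by simp only [a]; field_simp
    have hK0 : 0 ≤ K := hK ▸ Nat.cast_nonneg _
    have hP : 0 ≤ K * (a * a ^ q) := by positivity
    calc fm * n < K / n * (a * a ^ q) * n := by gcongr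
      _ = K * (a * a ^ q) := by field_simp
      _ ≤ c / n.choose ζ * a ^ q * K := by rw [hcC]; linarith
  rw [hMeq]
  refine posDef_sub_smul_ones (.ext fun i j => ?_) hfm0 (by simpa using hfm_lt) fun x => ?_
  · simp [Matrix.sum_apply, complOnes, and_comm]
  · simpa [hK] using le_dotProduct_sum_smul_complOnes_mulVec hζ1 (by simpa using hn)
      (by positivity) hlamI x

/-- Positive definiteness of the matrix
`M_{ij} = (c/C(n,ζ)) Σ_{|I|=ζ} λ_I (E_I)_{ij} − f_m·𝟏` under the cone condition, `2ζ ≥ n`,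
and the bound `f_m < (K/n)·(c/(2C(n,ζ)))^{n/(n−ζ)}` with `K = C(n−2,ζ−1)`. -/
theorem stmt_16 (n ζ : ℕ) (hn : 2 ≤ n) (hζ1 : 1 ≤ ζ) (hζ2 : ζ ≤ n - 1) (hζ3 : n ≤ 2 * ζ)
    (c : ℝ) (hc : 0 < c) (K : ℝ) (hK : K = ((n - 2).choose (ζ - 1) : ℝ)) (hKpos : 0 < K)
    (fm : ℝ) (hfm0 : 0 ≤ fm)
    (hfm : fm < K / n * (c / (2 * (n.choose ζ : ℝ))) ^ ((n : ℝ) / ((n : ℝ) - ζ)))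
    (lam : Fin n → ℝ) (hlam : ∀ i, 0 < lam i)
    (hcone : ∀ i : Fin n,
      c / (2 * (n.choose ζ : ℝ)) *
        (∑ t ∈ (Finset.univ.erase i).powersetCard (n - ζ), ∏ j ∈ t, 1 / lam j) < 1)
    (M : Matrix (Fin n) (Fin n) ℝ)
    (hM : ∀ i j, M i j = c / (n.choose ζ : ℝ) *
        (∑ I ∈ Finset.univ.powersetCard ζ,
          (∏ t ∈ I, lam t) * (if i ∉ I ∧ j ∉ I then (1 : ℝ) else 0)) - fm) :
    M.PosDef :=
  stmt_16_general n ζ hn hζ1 hζ2 hζ3 c hc K hK fm hfm0 hfm lam hlam hcone M hM
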